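/- arXiv:1607.00355 — 2 statements merged into one kernel-verified Lean document; each statement's English description precedes it below -/
import Mathlib

section
/- For all u ∈ [0,1], φ(u) ≥ u², with equality if and only if u ∈ {0,1}, where φ(u) = H((1 - √(1-u²))/2). -/
open Real

noncomputable def binEnt (q : ℝ) : ℝ := -(q * Real.logb 2 q) - (1 - q) * Real.logb 2 (1 - q)

noncomputable def Bh (q : ℝ) : ℝ := 2 * Real.sqrt (q * (1 - q))

noncomputable def phi (u : ℝ) : ℝ := binEnt ((1 - Real.sqrt (1 - u ^ 2)) / 2)

/-!
With `s = √(1 - u²)` and `q = (1 - s) / 2` one has `u² = 4 q (1 - q)` and `φ(u) = H(q)`, so the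
claim is the bound `h(q) > 4 log 2 · q (1 - q)` on `(0, 1/2)` for the natural-log entropy `h`.
The gap `h(q) - 4 log 2 · q (1 - q)` vanishes at `0` and `1/2`, is flat at `1/2`, and has second
derivative `8 log 2 - 1 / (q (1 - q))`: it is strictly concave up to the point `c` where
`8 log 2 · c (1 - c) = 1` and strictly convex after it. Convexity and flatness at `1/2` make it
positive on `[c, 1/2)`; concavity then makes it positive on `(0, c)`.
-/

open Set Topology

theorem pos_of_strictConcaveOn_of_strictConvexOn {f : ℝ → ℝ} {a b c : ℝ} (hac : a < c)
    (hcb : c < b) (hcave : StrictConcaveOn ℝ (Icc a c) f) (hvex : StrictConvexOn ℝ (Icc c b) f)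
    (ha : f a = 0) (hb : f b = 0) (hfb : HasDerivAt f 0 b) {x : ℝ} (hx : x ∈ Ioo a b) :
    0 < f x := by
  have convex_part : ∀ y ∈ Ico c b, 0 < f y := fun y hy => by
    have h := hvex.slope_lt_of_hasDerivAt (Ico_subset_Icc_self hy) (right_mem_Icc.2 hcb.le)
      hy.2 hfb
    rw [slope_def_field, hb, div_neg_iff] at h
    rcases h with ⟨_, h⟩ | ⟨h, _⟩ <;> linarith [hy.2]
  rcases lt_or_ge x c with hxc | hcx
  · have h := hcave.lt_on_openSegment (left_mem_Icc.2 hac.le) (right_mem_Icc.2 hac.le) hac.ne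
      (by rw [openSegment_eq_Ioo hac]; exact ⟨hx.1, hxc⟩)
    rwa [ha, min_eq_left (convex_part c ⟨le_rfl, hcb⟩).le] at h
  · exact convex_part x ⟨hcx, hx.2⟩

namespace Real

noncomputable def binEntropyParabolaGap (p : ℝ) : ℝ := binEntropy p - 4 * log 2 * (p * (1 - p))

lemma continuous_binEntropyParabolaGap : Continuous binEntropyParabolaGap := by
  unfold binEntropyParabolaGap; fun_prop

lemma hasDerivAt_binEntropyParabolaGap {p : ℝ} (hp₀ : p ≠ 0) (hp₁ : p ≠ 1) :
    HasDerivAt binEntropyParabolaGap (log (1 - p) - log p - 4 * log 2 * (1 - 2 * p)) p := by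
  have hpoly : HasDerivAt (fun x : ℝ => 4 * log 2 * (x * (1 - x))) (4 * log 2 * (1 - 2 * p)) p :=
    (((hasDerivAt_id' p).mul ((hasDerivAt_id' p).const_sub 1)).const_mul (4 * log 2)).congr_deriv
      (by ring)
  exact (hasDerivAt_binEntropy hp₀ hp₁).sub hpoly

lemma deriv2_binEntropyParabolaGap {p : ℝ} (hp₀ : 0 < p) (hp₁ : p < 1) :
    deriv^[2] binEntropyParabolaGap p = 8 * log 2 - 1 / (p * (1 - p)) := by
  have hderiv : deriv binEntropyParabolaGap =ᶠ[𝓝 p]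
      fun x => log (1 - x) - log x - 4 * log 2 * (1 - 2 * x) := by
    filter_upwards [Ioo_mem_nhds hp₀ hp₁] with x hx
    exact (hasDerivAt_binEntropyParabolaGap hx.1.ne' (by linarith [hx.2])).deriv
  have h : HasDerivAt (fun x => log (1 - x) - log x - 4 * log 2 * (1 - 2 * x))
      (-1 / (1 - p) - 1 / p - 4 * log 2 * (-2)) p := by
    have h1 : HasDerivAt (fun x : ℝ => 1 - x) (-1) p := (hasDerivAt_id' p).const_sub 1
    refine ((h1.log (by linarith)).sub ((hasDerivAt_id' p).log hp₀.ne')).sub ?_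
    exact ((((hasDerivAt_id' p).const_mul 2).const_sub 1).const_mul (4 * log 2)).congr_deriv
      (by ring)
  rw [Function.iterate_succ_apply, Function.iterate_one, hderiv.deriv_eq, h.deriv]
  have : 1 - p ≠ 0 := by linarith
  field_simp
  ring

lemma exists_eight_mul_log_two_mul_mul_one_sub_eq_one :
    ∃ c ∈ Ioo (0 : ℝ) 2⁻¹, 8 * log 2 * (c * (1 - c)) = 1 := by
  have hcont : ContinuousOn (fun x : ℝ => 8 * log 2 * (x * (1 - x))) (Icc 0 2⁻¹) := by fun_prop
  exact intermediate_value_Ioo (by norm_num) hcont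
    ⟨by norm_num, by norm_num; linarith [log_two_gt_d9]⟩

theorem four_mul_log_two_mul_lt_binEntropy {p : ℝ} (hp₀ : 0 < p) (hp₁ : p < 2⁻¹) :
    4 * log 2 * (p * (1 - p)) < binEntropy p := by
  obtain ⟨c, ⟨hc₀, hc₁⟩, hc⟩ := exists_eight_mul_log_two_mul_mul_one_sub_eq_one
  have hlog : 0 < log 2 := log_pos one_lt_two
  have hcave : StrictConcaveOn ℝ (Icc 0 c) binEntropyParabolaGap := by
    refine strictConcaveOn_of_deriv2_neg (convex_Icc 0 c)
      continuous_binEntropyParabolaGap.continuousOn ?_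
    rw [interior_Icc]
    rintro x ⟨hx₀, hxc⟩
    have hx : 0 < x * (1 - x) := by nlinarith
    rw [deriv2_binEntropyParabolaGap hx₀ (by linarith), sub_neg, lt_div_iff₀ hx]
    have : x * (1 - x) < c * (1 - c) := by nlinarith
    nlinarith
  have hvex : StrictConvexOn ℝ (Icc c 2⁻¹) binEntropyParabolaGap := by
    refine strictConvexOn_of_deriv2_pos (convex_Icc c 2⁻¹)
      continuous_binEntropyParabolaGap.continuousOn ?_
    rw [interior_Icc]
    rintro x ⟨hcx, hx₁⟩
    have hx : 0 < x * (1 - x) := by nlinarith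
    rw [deriv2_binEntropyParabolaGap (by linarith) (by linarith), sub_pos, div_lt_iff₀ hx]
    have : c * (1 - c) < x * (1 - x) := by nlinarith
    nlinarith
  have hflat : HasDerivAt binEntropyParabolaGap 0 2⁻¹ := by
    convert hasDerivAt_binEntropyParabolaGap (p := 2⁻¹) (by norm_num) (by norm_num) using 1
    norm_num
  have h := pos_of_strictConcaveOn_of_strictConvexOn hc₀ hc₁ hcave hvex
    (by simp [binEntropyParabolaGap]) (by simp [binEntropyParabolaGap]; ring) hflat ⟨hp₀, hp₁⟩
  unfold binEntropyParabolaGap at h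
  linarith

end Real

lemma binEnt_eq_binEntropy_div_log_two (q : ℝ) : binEnt q = binEntropy q / log 2 := by
  simp only [binEnt, binEntropy, logb, log_inv]
  ring

lemma phi_zero : phi 0 = 0 := by
  simp [phi, binEnt]

lemma phi_one : phi 1 = 1 := by
  simp [phi, binEnt_eq_binEntropy_div_log_two, (log_pos one_lt_two).ne']

lemma sq_lt_phi {u : ℝ} (h₀ : 0 < u) (h₁ : u < 1) : u ^ 2 < phi u := by
  set s := √(1 - u ^ 2) with hs
  have hs₀ : 0 < s := sqrt_pos.2 (by nlinarith)
  have hs_sq : s ^ 2 = 1 - u ^ 2 := sq_sqrt (by nlinarith)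
  have hu : u ^ 2 = 4 * ((1 - s) / 2 * (1 - (1 - s) / 2)) := by linear_combination hs_sq
  have h := four_mul_log_two_mul_lt_binEntropy (p := (1 - s) / 2) (by nlinarith) (by linarith)
  rw [phi, ← hs, binEnt_eq_binEntropy_div_log_two, lt_div_iff₀ (log_pos one_lt_two), hu]
  linarith

theorem phi_ge_sq (u : ℝ) (hu : u ∈ Set.Icc (0:ℝ) 1) :
    u ^ 2 ≤ phi u ∧ (phi u = u ^ 2 ↔ u = 0 ∨ u = 1) := by
  rcases hu.1.eq_or_lt with rfl | h₀
  · simp [phi_zero]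
  rcases hu.2.eq_or_lt with rfl | h₁
  · simp [phi_one]
  have h := sq_lt_phi h₀ h₁
  exact ⟨h.le, iff_of_false h.ne' (by rintro (rfl | rfl) <;> simp at h₀ h₁)⟩
end

section
/- The derivative of φ at u = 1 (one-sided from the left) equals 1/ln 2, where φ(u) = H((1 - √(1-u²))/2). -/
/-!
Near `u = 1` put `s = √(1 - u²)`, so `φ(u) = H((1 - s)/2)`. On `(0, 1)` the chain rule gives
`φ'(u) = u · (log (1 + s) - log (1 - s)) / (2 s log 2)`, and since `log (1 + s) - log (1 - s)`
has derivative `2` at `s = 0`, this tends to `2 / (2 log 2) = 1 / log 2` as `u → 1⁻`.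
A function continuous at `1` whose derivative has a limit from the left has that limit as its
left derivative.
-/

open Real

open Set Filter Topology

lemma binEnt_eq_binEntropy_div : binEnt = fun q => binEntropy q / log 2 := by
  funext q
  simp only [binEnt, binEntropy, logb, log_inv]
  ring

lemma continuous_binEnt : Continuous binEnt := by
  rw [binEnt_eq_binEntropy_div]
  fun_prop

lemma hasDerivAt_binEnt {q : ℝ} (hq₀ : q ≠ 0) (hq₁ : q ≠ 1) :
    HasDerivAt binEnt ((log (1 - q) - log q) / log 2) q := by
  rw [binEnt_eq_binEntropy_div]
  exact (hasDerivAt_binEntropy hq₀ hq₁).div_const _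

lemma continuous_phi : Continuous phi := by
  unfold phi
  exact continuous_binEnt.comp (by fun_prop)

noncomputable def phiDeriv (u : ℝ) : ℝ :=
  (log (1 + √(1 - u ^ 2)) - log (1 - √(1 - u ^ 2))) / √(1 - u ^ 2) * u / (2 * log 2)

lemma hasDerivAt_sqrt_one_sub_sq {u : ℝ} (hu : u ^ 2 < 1) :
    HasDerivAt (fun u : ℝ => √(1 - u ^ 2)) (-u / √(1 - u ^ 2)) u := by
  have hpoly : HasDerivAt (fun u : ℝ => 1 - u ^ 2) (-(2 * u)) u := by
    simpa using (hasDerivAt_pow 2 u).const_sub 1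
  refine (hpoly.sqrt (sub_pos.2 hu).ne').congr_deriv ?_
  field_simp

lemma hasDerivAt_phi {u : ℝ} (hu : u ∈ Ioo (0 : ℝ) 1) : HasDerivAt phi (phiDeriv u) u := by
  obtain ⟨hu₀, hu₁⟩ := hu
  have hu_sq : u ^ 2 < 1 := by nlinarith
  set s := √(1 - u ^ 2) with hs
  have hs₀ : 0 < s := sqrt_pos.2 (sub_pos.2 hu_sq)
  have hs₁ : s < 1 := by
    rw [hs, sqrt_lt' one_pos]
    nlinarith
  have hq : HasDerivAt (fun u : ℝ => (1 - √(1 - u ^ 2)) / 2) (u / (2 * s)) u := by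
    refine (((hasDerivAt_sqrt_one_sub_sq hu_sq).const_sub 1).div_const 2).congr_deriv ?_
    rw [← hs]
    field_simp
  have hH := hasDerivAt_binEnt (q := (1 - s) / 2) (by linarith) (by linarith)
  refine (hH.comp u hq).congr_deriv ?_
  have h_one_sub : 1 - (1 - s) / 2 = (1 + s) / 2 := by ring
  rw [phiDeriv, ← hs, h_one_sub, log_div (by linarith) two_ne_zero,
    log_div (by linarith) two_ne_zero]
  field_simp
  ring

lemma tendsto_log_one_add_sub_log_one_sub_div :
    Tendsto (fun t : ℝ => (log (1 + t) - log (1 - t)) / t) (𝓝[≠] 0) (𝓝 2) := by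
  have h_add := ((hasDerivAt_id (0 : ℝ)).const_add 1).log (by norm_num)
  have h_sub := ((hasDerivAt_id (0 : ℝ)).const_sub 1).log (by norm_num)
  have hderiv : HasDerivAt (fun t : ℝ => log (1 + t) - log (1 - t)) 2 0 :=
    (h_add.sub h_sub).congr_deriv (by norm_num)
  rw [hasDerivAt_iff_tendsto_slope] at hderiv
  exact hderiv.congr fun t => by simp [slope_def_field]

lemma tendsto_sqrt_one_sub_sq_nhdsLT_one :
    Tendsto (fun u : ℝ => √(1 - u ^ 2)) (𝓝[<] 1) (𝓝[>] 0) := by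
  refine tendsto_nhdsWithin_iff.2 ⟨?_, ?_⟩
  · have hcont : ContinuousAt (fun u : ℝ => √(1 - u ^ 2)) 1 := by fun_prop
    simpa using hcont.tendsto.mono_left nhdsWithin_le_nhds
  · filter_upwards [Ioo_mem_nhdsLT (zero_lt_one' ℝ)] with u hu
    exact sqrt_pos.2 (by nlinarith [hu.1, hu.2])

lemma tendsto_phiDeriv_nhdsLT_one : Tendsto phiDeriv (𝓝[<] 1) (𝓝 (1 / log 2)) := by
  have hratio := tendsto_log_one_add_sub_log_one_sub_div.comp
    (tendsto_sqrt_one_sub_sq_nhdsLT_one.mono_right (nhdsGT_le_nhdsNE 0))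
  have hid : Tendsto (fun u : ℝ => u) (𝓝[<] 1) (𝓝 1) := nhdsWithin_le_nhds
  rw [show 1 / log 2 = 2 * 1 / (2 * log 2) by field_simp]
  exact (hratio.mul hid).div_const _

theorem phi_deriv_at_one :
    HasDerivWithinAt phi (1 / Real.log 2) (Set.Iic 1) 1 := by
  have hIoo : Ioo (0 : ℝ) 1 ∈ 𝓝[<] (1 : ℝ) := Ioo_mem_nhdsLT one_pos
  refine hasDerivWithinAt_Iic_of_tendsto_deriv
    (fun u hu => (hasDerivAt_phi hu).differentiableAt.differentiableWithinAt)
    continuous_phi.continuousWithinAt hIoo ?_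
  refine tendsto_phiDeriv_nhdsLT_one.congr' ?_
  filter_upwards [hIoo] with u hu
  exact (hasDerivAt_phi hu).deriv.symm
end
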